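/- arXiv:math/0503648 — 6 statements merged into one kernel-verified Lean document; each statement's English description precedes it below -/
import Mathlib

section
/- The map exp_Z : x·ℤ[[x]] → 1 + x·ℤ[[x]] given by exp_Z(∑_{i≥1} a_i x^i) = ∏_{i≥1} (1 + (-x)^i)^{a_i} is a bijection. -/
open PowerSeries

/-- The unit `1 + (-X)^i` of `ℤ[[X]]` (for `i ≥ 1`; junk value `1` otherwise). -/
noncomputable def factorUnit (i : ℕ) : (PowerSeries ℤ)ˣ :=
  @dite _ (IsUnit ((1 : PowerSeries ℤ) + (-X) ^ i)) (Classical.dec _)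
    (fun h => h.unit) (fun _ => 1)

/-- The formal exponential `exp_ℤ(∑_{i≥1} aᵢ xⁱ) = ∏_{i≥1} (1 + (-x)^i)^{aᵢ}`.
Since the factor for index `i` is `1` plus terms of degree `≥ i`, the coefficient of `xⁿ`
in the (x-adically convergent) infinite product equals the coefficient of `xⁿ` in the
finite partial product over `1 ≤ i ≤ n`. -/
noncomputable def expZ (a : ℕ → ℤ) : PowerSeries ℤ :=
  PowerSeries.mk fun n =>
    (PowerSeries.coeff (R := ℤ) n) ((∏ i ∈ Finset.Icc 1 n, factorUnit i ^ a i : (PowerSeries ℤ)ˣ) : PowerSeries ℤ)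


open Finset in
section
lemma isUnit_factor {i : ℕ} (hi : 1 ≤ i) : IsUnit ((1 : PowerSeries ℤ) + (-X) ^ i) := by
  rw [PowerSeries.isUnit_iff_constantCoeff]
  simp [constantCoeff_X, zero_pow (by omega : i ≠ 0)]

lemma factorUnit_coe {i : ℕ} (hi : 1 ≤ i) :
    (factorUnit i : PowerSeries ℤ) = 1 + (-X) ^ i := by
  rw [factorUnit, dif_pos (isUnit_factor hi), IsUnit.unit_spec]

lemma coeff_neg_X_pow (i j : ℕ) :
    (PowerSeries.coeff (R := ℤ) j) ((-X) ^ i) = (-1) ^ i * (if j = i then 1 else 0) := by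
  have h : ((-X : PowerSeries ℤ)) ^ i = (PowerSeries.C (R := ℤ)) ((-1) ^ i) * X ^ i := by
    rw [neg_pow]; congr 1; rw [map_pow, map_neg, map_one]
  rw [h, PowerSeries.coeff_C_mul, PowerSeries.coeff_X_pow]

/-- `Good i c v` : for `j ≤ i`, the coefficients of `v` are those of `1 + c X^i`. -/
def Good (i : ℕ) (c : ℤ) (v : (PowerSeries ℤ)ˣ) : Prop :=
  ∀ j ≤ i, (PowerSeries.coeff (R := ℤ) j) (v : PowerSeries ℤ) =
    if j = 0 then 1 else if j = i then c else 0

lemma good_factorUnit {i : ℕ} (hi : 1 ≤ i) : Good i ((-1) ^ i) (factorUnit i) := by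
  intro j hj
  rw [factorUnit_coe hi, map_add, coeff_neg_X_pow, PowerSeries.coeff_one]
  rcases eq_or_ne j 0 with rfl | h0
  · have : (0:ℕ) ≠ i := by omega
    simp [this]
  · rcases eq_or_ne j i with rfl | h1
    · simp [h0]
    · simp [h0, h1]

/-- Multiplying by a `Good` unit: coefficients up to `i`. -/
lemma coeff_mul_good {i : ℕ} {c : ℤ} {v : (PowerSeries ℤ)ˣ} (hi : 1 ≤ i)
    (hv : Good i c v) (w : PowerSeries ℤ) {j : ℕ} (hj : j ≤ i) :
    (PowerSeries.coeff (R := ℤ) j) ((v : PowerSeries ℤ) * w) =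
      (PowerSeries.coeff (R := ℤ) j) w +
        (if j = i then c * (PowerSeries.constantCoeff (R := ℤ)) w else 0) := by
  rw [PowerSeries.coeff_mul, Finset.Nat.sum_antidiagonal_eq_sum_range_succ_mk]
  have key : ∀ k ∈ Finset.range (j + 1),
      (PowerSeries.coeff (R := ℤ) k) (v : PowerSeries ℤ) * (PowerSeries.coeff (R := ℤ) (j - k)) w =
        (if k = 0 then (PowerSeries.coeff (R := ℤ) j) w else 0) +
        (if k = i ∧ j = i then c * (PowerSeries.constantCoeff (R := ℤ)) w else 0) := by
    intro k hk
    rw [Finset.mem_range] at hk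
    rw [hv k (by omega)]
    rcases eq_or_ne k 0 with rfl | h0
    · simp [(by omega : (0:ℕ) ≠ i)]
      exact fun h => absurd h (by omega)
    · rcases eq_or_ne k i with hki | h1
      · subst hki
        have hji : j = k := by omega
        subst hji
        simp [h0, Nat.sub_self, ← PowerSeries.coeff_zero_eq_constantCoeff, mul_comm]
      · simp [h0, h1]
  rw [Finset.sum_congr rfl key, Finset.sum_add_distrib]
  congr 1
  · rw [Finset.sum_ite_eq' (Finset.range (j+1)) 0]
    simp
  · rcases eq_or_ne j i with rfl | h
    · simp only [and_true]
      rw [Finset.sum_ite_eq' (Finset.range (j+1)) j]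
      simp
    · simp [h]

lemma good_one {i : ℕ} (hi : 1 ≤ i) : Good i 0 1 := by
  intro j hj
  rcases eq_or_ne j 0 with rfl | h0
  · simp
  · simp [PowerSeries.coeff_one, h0]

lemma good_mul {i : ℕ} {c d : ℤ} {v w : (PowerSeries ℤ)ˣ} (hi : 1 ≤ i)
    (hv : Good i c v) (hw : Good i d w) : Good i (c + d) (v * w) := by
  intro j hj
  have : ((v * w : (PowerSeries ℤ)ˣ) : PowerSeries ℤ) = (v : PowerSeries ℤ) * w := rfl
  rw [this, coeff_mul_good hi hv _ hj, hw j hj]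
  have h00 : (PowerSeries.constantCoeff (R := ℤ)) (w : PowerSeries ℤ) = 1 := by
    have := hw 0 (by omega)
    simpa [← PowerSeries.coeff_zero_eq_constantCoeff] using this
  rcases eq_or_ne j 0 with rfl | h0
  · simp [(by omega : (0:ℕ) ≠ i)]
    exact fun h => absurd h (by omega)
  · rcases eq_or_ne j i with hji | h1
    · subst hji
      rw [if_neg h0, if_pos rfl, if_pos rfl, if_neg h0, if_pos rfl, h00]
      ring
    · simp [h0, h1]

lemma good_inv {i : ℕ} {c : ℤ} {v : (PowerSeries ℤ)ˣ} (hi : 1 ≤ i)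
    (hv : Good i c v) : Good i (-c) v⁻¹ := by
  have base : ∀ j ≤ i, (PowerSeries.coeff (R := ℤ) j) (1 : PowerSeries ℤ) =
      (PowerSeries.coeff (R := ℤ) j) ((v⁻¹ : (PowerSeries ℤ)ˣ) : PowerSeries ℤ) +
      (if j = i then c * (PowerSeries.constantCoeff (R := ℤ))
        ((v⁻¹ : (PowerSeries ℤ)ˣ) : PowerSeries ℤ) else 0) := by
    intro j hj
    rw [← coeff_mul_good hi hv _ hj, ← Units.val_mul, mul_inv_cancel, Units.val_one]
  have h0 : (PowerSeries.constantCoeff (R := ℤ)) ((v⁻¹ : (PowerSeries ℤ)ˣ) : PowerSeries ℤ) = 1 := by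
    have := base 0 (by omega)
    simp [(by omega : (0:ℕ) ≠ i), ← PowerSeries.coeff_zero_eq_constantCoeff] at this ⊢
    omega
  intro j hj
  have := base j hj
  rcases eq_or_ne j 0 with rfl | hj0
  · simpa [← PowerSeries.coeff_zero_eq_constantCoeff] using h0
  · rcases eq_or_ne j i with rfl | hj1
    · rw [if_pos rfl, h0, mul_one, PowerSeries.coeff_one, if_neg hj0] at this
      simp [hj0]
      omega
    · rw [if_neg hj1, add_zero, PowerSeries.coeff_one, if_neg hj0] at this
      simp [hj0, hj1, ← this]

lemma good_zpow {i : ℕ} {c : ℤ} {v : (PowerSeries ℤ)ˣ} (hi : 1 ≤ i)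
    (hv : Good i c v) (m : ℤ) : Good i (m * c) (v ^ m) := by
  induction m using Int.induction_on with
  | zero => simpa using good_one hi
  | succ n ih =>
      have h := good_mul hi ih hv
      rw [zpow_add_one]
      have e : ((n : ℤ) + 1) * c = (n : ℤ) * c + c := by ring
      rw [e]; exact h
  | pred n ih =>
      have h := good_mul hi ih (good_inv hi hv)
      rw [zpow_sub_one]
      have e : (-(n : ℤ) - 1) * c = -(n : ℤ) * c + -c := by ring
      rw [e]; exact h

lemma good_factor_zpow {i : ℕ} (hi : 1 ≤ i) (m : ℤ) :
    Good i (m * (-1) ^ i) (factorUnit i ^ m) := good_zpow hi (good_factorUnit hi) m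

noncomputable def Pprod (a : ℕ → ℤ) (n : ℕ) : (PowerSeries ℤ)ˣ :=
  ∏ i ∈ Finset.Icc 1 n, factorUnit i ^ a i

lemma Pprod_coe (a : ℕ → ℤ) (n : ℕ) :
    ((Pprod a n : (PowerSeries ℤ)ˣ) : PowerSeries ℤ) =
      ∏ i ∈ Finset.Icc 1 n, ((factorUnit i ^ a i : (PowerSeries ℤ)ˣ) : PowerSeries ℤ) :=
  map_prod (Units.coeHom _) _ _

lemma constCoeff_Pprod (a : ℕ → ℤ) (n : ℕ) :
    (PowerSeries.constantCoeff (R := ℤ)) ((Pprod a n : (PowerSeries ℤ)ˣ) : PowerSeries ℤ) = 1 := by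
  rw [Pprod_coe, map_prod]
  apply Finset.prod_eq_one
  intro i hi
  rw [Finset.mem_Icc] at hi
  have := good_factor_zpow hi.1 (a i) 0 (by omega)
  simpa [← PowerSeries.coeff_zero_eq_constantCoeff] using this

lemma Pprod_succ (a : ℕ → ℤ) (n : ℕ) :
    Pprod a (n + 1) = Pprod a n * factorUnit (n + 1) ^ a (n + 1) := by
  rw [Pprod, Pprod, Finset.prod_Icc_succ_top (by omega : 1 ≤ n + 1)]

lemma coeff_Pprod_succ (a : ℕ → ℤ) {j n : ℕ} (hj : j ≤ n + 1) :
    (PowerSeries.coeff (R := ℤ) j) ((Pprod a (n + 1) : (PowerSeries ℤ)ˣ) : PowerSeries ℤ) =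
      (PowerSeries.coeff (R := ℤ) j) ((Pprod a n : (PowerSeries ℤ)ˣ) : PowerSeries ℤ) +
      (if j = n + 1 then a (n + 1) * (-1) ^ (n + 1) else 0) := by
  rw [Pprod_succ, Units.val_mul, mul_comm,
    coeff_mul_good (by omega : 1 ≤ n + 1) (good_factor_zpow (by omega) (a (n+1))) _ hj,
    constCoeff_Pprod]
  simp

lemma coeff_Pprod_stable (a : ℕ → ℤ) {j n N : ℕ} (hjn : j ≤ n) (hnN : n ≤ N) :
    (PowerSeries.coeff (R := ℤ) j) ((Pprod a N : (PowerSeries ℤ)ˣ) : PowerSeries ℤ) =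
      (PowerSeries.coeff (R := ℤ) j) ((Pprod a n : (PowerSeries ℤ)ˣ) : PowerSeries ℤ) := by
  induction N, hnN using Nat.le_induction with
  | base => rfl
  | succ N hN ih =>
      rw [coeff_Pprod_succ a (by omega), ih, if_neg (by omega), add_zero]

lemma coeff_expZ (a : ℕ → ℤ) {j N : ℕ} (h : j ≤ N) :
    (PowerSeries.coeff (R := ℤ) j) (expZ a) =
      (PowerSeries.coeff (R := ℤ) j) ((Pprod a N : (PowerSeries ℤ)ˣ) : PowerSeries ℤ) := by
  rw [expZ, PowerSeries.coeff_mk]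
  exact (coeff_Pprod_stable a le_rfl h).symm

lemma Pprod_congr {a b : ℕ → ℤ} {n : ℕ} (h : ∀ i, 1 ≤ i → i ≤ n → a i = b i) :
    Pprod a n = Pprod b n := by
  apply Finset.prod_congr rfl
  intro i hi
  rw [Finset.mem_Icc] at hi
  rw [h i hi.1 hi.2]

noncomputable def seqAux (f : PowerSeries ℤ) : ℕ → ℤ × (PowerSeries ℤ)ˣ
  | 0 => (0, 1)
  | n + 1 =>
      let p := seqAux f n
      let c := (-1) ^ (n + 1) *
        ((PowerSeries.coeff (R := ℤ) (n + 1)) f - (PowerSeries.coeff (R := ℤ) (n + 1)) (p.2 : PowerSeries ℤ))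
      (c, p.2 * factorUnit (n + 1) ^ c)

noncomputable def seq (f : PowerSeries ℤ) (n : ℕ) : ℤ := (seqAux f n).1

lemma Pprod_zero (a : ℕ → ℤ) : Pprod a 0 = 1 := by
  rw [Pprod, Finset.Icc_eq_empty (by omega), Finset.prod_empty]

lemma seqAux_snd (f : PowerSeries ℤ) (n : ℕ) : (seqAux f n).2 = Pprod (seq f) n := by
  induction n with
  | zero => rw [Pprod_zero]; rfl
  | succ n ih =>
      rw [Pprod_succ, ← ih]
      rfl

lemma neg_one_pow_sq (n : ℕ) : ((-1 : ℤ) ^ n) * ((-1 : ℤ) ^ n) = 1 := by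
  rw [← pow_add, show n + n = 2 * n from by ring, pow_mul]
  norm_num

lemma seq_matches (f : PowerSeries ℤ) (hf : (PowerSeries.constantCoeff (R := ℤ)) f = 1) (n : ℕ) :
    (PowerSeries.coeff (R := ℤ) n) ((Pprod (seq f) n : (PowerSeries ℤ)ˣ) : PowerSeries ℤ) =
      (PowerSeries.coeff (R := ℤ) n) f := by
  induction n with
  | zero =>
      have h := constCoeff_Pprod (seq f) 0
      simp only [← PowerSeries.coeff_zero_eq_constantCoeff] at h hf
      rw [h, hf]
  | succ n ih =>
      rw [coeff_Pprod_succ (seq f) le_rfl, if_pos rfl]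
      have hs : seq f (n + 1) = (-1) ^ (n + 1) *
          ((PowerSeries.coeff (R := ℤ) (n + 1)) f -
            (PowerSeries.coeff (R := ℤ) (n + 1)) ((Pprod (seq f) n : (PowerSeries ℤ)ˣ) : PowerSeries ℤ)) := by
        show (seqAux f (n+1)).1 = _
        rw [seqAux]
        simp only [← seqAux_snd]
      rw [hs]
      have h2 := neg_one_pow_sq (n + 1)
      linear_combination ((PowerSeries.coeff (R := ℤ) (n + 1)) f -
        (PowerSeries.coeff (R := ℤ) (n + 1)) ((Pprod (seq f) n : (PowerSeries ℤ)ˣ) : PowerSeries ℤ)) * h2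

end

/-- `exp_ℤ : x·ℤ[[x]] → 1 + x·ℤ[[x]]` is a bijection: it lands in `1 + x·ℤ[[x]]`,
and every power series with constant term `1` is `exp_ℤ` of a unique sequence
(a sequence `a : ℕ → ℤ` with `a 0 = 0` represents `∑_{i≥1} aᵢ xⁱ ∈ x·ℤ[[x]]`). -/
theorem expZ_bijective :
    (∀ a : ℕ → ℤ, (PowerSeries.constantCoeff (R := ℤ)) (expZ a) = 1) ∧
    (∀ f : PowerSeries ℤ, (PowerSeries.constantCoeff (R := ℤ)) f = 1 →
      ∃! a : ℕ → ℤ, a 0 = 0 ∧ expZ a = f) := by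
  constructor
  · intro a
    have h := coeff_expZ a (le_refl 0)
    rw [Pprod_zero] at h
    simp only [← PowerSeries.coeff_zero_eq_constantCoeff]
    rw [h, Units.val_one, PowerSeries.coeff_zero_eq_constantCoeff]
    simp
  · intro f hf
    refine ⟨seq f, ⟨rfl, ?_⟩, ?_⟩
    · ext n
      rw [coeff_expZ (seq f) (le_refl n), seq_matches f hf n]
    · rintro b ⟨hb0, hbf⟩
      funext n
      induction n using Nat.strong_induction_on with
      | _ n ih =>
        match n with
        | 0 => rw [hb0]; rfl
        | Nat.succ m =>
          have hP : Pprod b m = Pprod (seq f) m :=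
            Pprod_congr (fun i h1 h2 => ih i (by omega))
          have hcb : (PowerSeries.coeff (R := ℤ) (m+1)) ((Pprod b (m+1) : (PowerSeries ℤ)ˣ) : PowerSeries ℤ)
              = (PowerSeries.coeff (R := ℤ) (m+1)) f := by
            rw [← coeff_expZ b (le_refl (m+1)), hbf]
          have hcs := seq_matches f hf (m+1)
          rw [coeff_Pprod_succ b le_rfl, if_pos rfl, hP] at hcb
          rw [coeff_Pprod_succ (seq f) le_rfl, if_pos rfl] at hcs
          have : b (m+1) * (-1) ^ (m+1) = seq f (m+1) * (-1) ^ (m+1) := by omega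
          have hne : ((-1 : ℤ)) ^ (m+1) ≠ 0 := by
            intro h
            have := neg_one_pow_sq (m+1)
            rw [h] at this
            omega
          exact mul_right_cancel₀ hne this
end

section
/- For any γ ∈ x·ℤ[[x]], the power series √(1+4γ), defined by the binomial series ∑_{n≥0} C(1/2, n) (4γ)^n, has integer coefficients; equivalently, there exists h ∈ 1 + x·ℤ[[x]] with h^2 = 1 + 4γ. -/
open PowerSeries

private noncomputable def sqc (γ : PowerSeries ℤ) : ℕ → ℤ
  | 0 => 0
  | (n+1) => (PowerSeries.coeff (R := ℤ) (n+1)) γ -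
      ∑ i ∈ (Finset.Ioo 0 (n+1)).attach,
        have h1 : (i : ℕ) < n + 1 := (Finset.mem_Ioo.mp i.2).2
        have h2 : n + 1 - (i : ℕ) < n + 1 :=
          Nat.sub_lt (Nat.succ_pos n) (Finset.mem_Ioo.mp i.2).1
        sqc γ i * sqc γ (n + 1 - i)
  termination_by n => n

private lemma sqc_zero (γ : PowerSeries ℤ) : sqc γ 0 = 0 := by rw [sqc]

private lemma sqc_succ (γ : PowerSeries ℤ) (n : ℕ) :
    sqc γ (n+1) = (PowerSeries.coeff (R := ℤ) (n+1)) γ -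
      ∑ i ∈ Finset.Ioo 0 (n+1), sqc γ i * sqc γ (n + 1 - i) := by
  rw [sqc]
  rw [Finset.sum_attach (Finset.Ioo 0 (n+1)) (fun i => sqc γ i * sqc γ (n + 1 - i))]

private lemma sqc_spec (γ : PowerSeries ℤ) (hγ : (PowerSeries.constantCoeff (R := ℤ)) γ = 0) :
    PowerSeries.mk (sqc γ) + (PowerSeries.mk (sqc γ)) ^ 2 = γ := by
  ext n
  simp only [map_add, PowerSeries.coeff_mk, sq, PowerSeries.coeff_mul, PowerSeries.coeff_mk]
  rw [Finset.Nat.sum_antidiagonal_eq_sum_range_succ_mk]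
  cases n with
  | zero =>
    rw [← PowerSeries.coeff_zero_eq_constantCoeff_apply] at hγ
    rw [Finset.sum_range_one, sqc_zero, hγ]
    ring
  | succ n =>
    have hsub : Finset.Ioo 0 (n+1) ⊆ Finset.range (n + 1 + 1) := by
      intro i hi
      exact Finset.mem_range.mpr (Nat.lt_succ_of_lt (Finset.mem_Ioo.mp hi).2)
    have hzero : ∀ i ∈ Finset.range (n + 1 + 1), i ∉ Finset.Ioo 0 (n+1) →
        sqc γ i * sqc γ (n + 1 - i) = 0 := by
      intro i hi hni
      rcases Nat.eq_zero_or_pos i with h0 | hpos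
      · subst h0; simp [sqc_zero]
      · have : ¬ i < n + 1 := fun h => hni (Finset.mem_Ioo.mpr ⟨hpos, h⟩)
        have hi' : i = n + 1 := le_antisymm (Nat.lt_succ_iff.mp (Finset.mem_range.mp hi))
          (not_lt.mp this)
        subst hi'
        simp [sqc_zero]
    rw [← Finset.sum_subset hsub hzero]
    rw [sqc_succ]
    ring

/-- For any `γ ∈ x·ℤ[[x]]`, the power series `√(1 + 4γ)` has integer coefficients:
there exists `h ∈ 1 + x·ℤ[[x]]` with `h² = 1 + 4γ`. -/
theorem sqrt_one_add_four_smul (γ : PowerSeries ℤ)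
    (hγ : (PowerSeries.constantCoeff (R := ℤ)) γ = 0) :
    ∃ h : PowerSeries ℤ, (PowerSeries.constantCoeff (R := ℤ)) h = 1 ∧ h ^ 2 = 1 + 4 * γ := by
  set g := PowerSeries.mk (sqc γ) with hg
  refine ⟨1 + 2 * g, ?_, ?_⟩
  · have : (PowerSeries.constantCoeff (R := ℤ)) g = 0 := by
      simp [hg, ← PowerSeries.coeff_zero_eq_constantCoeff_apply, sqc_zero]
    simp [this]
  · have key : g + g ^ 2 = γ := sqc_spec γ hγ
    calc (1 + 2 * g) ^ 2 = 1 + 4 * (g + g ^ 2) := by ring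
    _ = 1 + 4 * γ := by rw [key]
end

section
/- Let F, G ∈ 1 + x·ℤ[[x]] with F ≡ G (mod 4), i.e., every coefficient of F − G is divisible by 4. If F is a square in 1 + x·ℤ[[x]], then G is a square in 1 + x·ℤ[[x]]. -/
open PowerSeries

/-- Recursive solution `u` to `(mk c) * (mk u) - (mk u)^2 = mk a` when `c 0 = 1`, `a 0 = 0`. -/
def usq (a c : ℕ → ℤ) : ℕ → ℤ
  | 0 => 0
  | n + 1 =>
      a (n + 1)
        - ∑ k ∈ (Finset.Ico 1 (n + 2)).attach, c k.1 * usq a c (n + 1 - k.1)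
        + ∑ k ∈ (Finset.Ico 1 (n + 1)).attach, usq a c k.1 * usq a c (n + 1 - k.1)
  decreasing_by
    · have := (Finset.mem_Ico.mp k.2).1
      omega
    · have := (Finset.mem_Ico.mp k.2).2
      omega
    · have := Finset.mem_Ico.mp k.2
      omega

lemma usq_key (a c : ℕ → ℤ) (hc0 : c 0 = 1) (ha0 : a 0 = 0) :
    ∃ U : PowerSeries ℤ, constantCoeff U = 0 ∧
      PowerSeries.mk c * U - U ^ 2 = PowerSeries.mk a := by
  refine ⟨PowerSeries.mk (usq a c), by simp [usq], ?_⟩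
  ext n
  rcases n with _ | n
  · simp [pow_two, coeff_mul, Finset.Nat.antidiagonal_zero, usq, ha0]
  · have h1 : (coeff (n+1)) (PowerSeries.mk c * PowerSeries.mk (usq a c))
        = ∑ k ∈ Finset.range (n+2), c k * usq a c (n + 1 - k) := by
      rw [coeff_mul, Finset.Nat.sum_antidiagonal_eq_sum_range_succ_mk]
      simp
    have h2 : (coeff (n+1)) ((PowerSeries.mk (usq a c)) ^ 2)
        = ∑ k ∈ Finset.range (n+2), usq a c k * usq a c (n + 1 - k) := by
      rw [pow_two, coeff_mul, Finset.Nat.sum_antidiagonal_eq_sum_range_succ_mk]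
      simp
    have e1 : ∑ k ∈ Finset.range (n+2), c k * usq a c (n + 1 - k)
        = usq a c (n + 1) + ∑ k ∈ Finset.Ico 1 (n+2), c k * usq a c (n + 1 - k) := by
      rw [Finset.range_eq_Ico, Finset.sum_eq_sum_Ico_succ_bot (by omega)]
      simp [hc0]
    have e2 : ∑ k ∈ Finset.range (n+2), usq a c k * usq a c (n + 1 - k)
        = ∑ k ∈ Finset.Ico 1 (n+1), usq a c k * usq a c (n + 1 - k) := by
      rw [Finset.range_eq_Ico, Finset.sum_eq_sum_Ico_succ_bot (by omega),
        Finset.sum_Ico_succ_top (by omega)]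
      simp [usq]
    have hu : usq a c (n + 1)
        = a (n + 1)
          - ∑ k ∈ Finset.Ico 1 (n + 2), c k * usq a c (n + 1 - k)
          + ∑ k ∈ Finset.Ico 1 (n + 1), usq a c k * usq a c (n + 1 - k) := by
      rw [usq]
      rw [Finset.sum_attach (Finset.Ico 1 (n+2)) (fun k => c k * usq a c (n + 1 - k)),
        Finset.sum_attach (Finset.Ico 1 (n+1)) (fun k => usq a c k * usq a c (n + 1 - k))]
    simp only [map_sub, h1, h2, e1, e2, coeff_mk]
    rw [hu]; ring

/-- If `F, G ∈ 1 + x·ℤ[[x]]` with `F ≡ G (mod 4)` coefficientwise, and `F` is a square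
in `1 + x·ℤ[[x]]`, then so is `G`. -/
theorem square_mod_four (F G : PowerSeries ℤ)
    (hF : PowerSeries.constantCoeff F = 1)
    (hG : PowerSeries.constantCoeff G = 1)
    (hmod : ∀ n : ℕ, (4 : ℤ) ∣ (PowerSeries.coeff n) (F - G))
    (hsq : ∃ h : PowerSeries ℤ, PowerSeries.constantCoeff h = 1 ∧ h ^ 2 = F) :
    ∃ h : PowerSeries ℤ, PowerSeries.constantCoeff h = 1 ∧ h ^ 2 = G := by
  obtain ⟨h, h0, hsqF⟩ := hsq
  set a : ℕ → ℤ := fun n => (coeff n) (F - G) / 4 with ha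
  set c : ℕ → ℤ := fun n => (coeff n) h with hc
  have hmkc : PowerSeries.mk c = h := by ext n; simp [hc]
  have hA : (C 4) * PowerSeries.mk a = F - G := by
    ext n
    rw [coeff_C_mul, coeff_mk, ha]
    exact Int.mul_ediv_cancel' (hmod n)
  have ha0 : a 0 = 0 := by
    simp [ha, coeff_zero_eq_constantCoeff, hF, hG]
  have hc0 : c 0 = 1 := by
    simpa [hc, coeff_zero_eq_constantCoeff] using h0
  obtain ⟨U, hU0, hUeq⟩ := usq_key a c hc0 ha0
  rw [hmkc] at hUeq
  refine ⟨h - 2 * U, by simp [h0, hU0], ?_⟩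
  have : (h - 2 * U) ^ 2 = h ^ 2 - (C 4) * (h * U - U ^ 2) := by
    have : (C 4 : PowerSeries ℤ) = 4 := by simp [map_ofNat]
    rw [this]; ring
  rw [this, hUeq, hA, hsqF]
  ring
end

section
/- Suppose C ∈ 1 + z²·ℤ[z²] is a polynomial in z² with constant term 1 that factors as C(z) = φ(z)·φ(−z) for some integer polynomial φ ∈ ℤ[z]. Then C(z)·C(iz)·C(z²) is the square of a power series in 1 + z·ℤ[[z]]. -/
open PowerSeries

/-- The substitution `f(z) ↦ f(z²)` on `ℤ[[z]]`, defined coefficientwise. -/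
noncomputable def sqSub (f : PowerSeries ℤ) : PowerSeries ℤ :=
  PowerSeries.mk fun n => if 2 ∣ n then (PowerSeries.coeff (n / 2)) f else 0

/-- The substitution `f(z) ↦ f(iz)` for an even power series `f ∈ ℤ[[z²]]`:
the coefficient of `z^{2k}` gets multiplied by `i^{2k} = (-1)^k`. -/
noncomputable def iSub (f : PowerSeries ℤ) : PowerSeries ℤ :=
  PowerSeries.mk fun n => (-1) ^ (n / 2) * (PowerSeries.coeff n) f

namespace HK

abbrev S : Type := PowerSeries ℤ

noncomputable def negS : S →+* S := rescale (-1)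

@[simp] lemma coeff_negS (f : S) (n : ℕ) :
    (coeff n) (negS f) = (-1) ^ n * (coeff n) f := coeff_rescale f (-1) n

@[simp] lemma coeff_sqSub (f : S) (n : ℕ) :
    (coeff n) (sqSub f) = if 2 ∣ n then (coeff (n / 2)) f else 0 := coeff_mk _ _

lemma coeff_sqSub_even (f : S) (n : ℕ) : (coeff (2 * n)) (sqSub f) = (coeff n) f := by
  simp [Nat.mul_div_cancel_left n (by norm_num : 0 < 2)]

lemma coeff_sqSub_odd (f : S) (n : ℕ) : (coeff (2 * n + 1)) (sqSub f) = 0 := by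
  simp [Nat.two_dvd_ne_zero.mpr (by omega : (2 * n + 1) % 2 = 1)]

lemma sqSub_injective : Function.Injective sqSub := by
  intro f g h
  ext n
  have := congrArg (coeff (2 * n)) h
  rwa [coeff_sqSub_even, coeff_sqSub_even] at this

lemma sum_range_even (u : ℕ → ℤ) (hu : ∀ i, ¬ 2 ∣ i → u i = 0) (m : ℕ) :
    ∑ i ∈ Finset.range (2 * m + 1), u i = ∑ k ∈ Finset.range (m + 1), u (2 * k) := by
  induction m with
  | zero => simp
  | succ m ih =>
      have h1 : 2 * (m + 1) + 1 = (2 * m + 1) + 1 + 1 := by ring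
      rw [h1, Finset.sum_range_succ, Finset.sum_range_succ, ih, Finset.sum_range_succ,
        hu (2 * m + 1) (by omega)]
      rw [Finset.sum_range_succ (fun k => u (2 * k)) (m + 1),
        Finset.sum_range_succ (fun k => u (2 * k)) m]
      have h2 : 2 * (m + 1) = 2 * m + 2 := by ring
      rw [h2]; ring

lemma sqSub_mul (f g : S) : sqSub (f * g) = sqSub f * sqSub g := by
  ext n
  rcases Nat.even_or_odd n with ⟨m, hm⟩ | ⟨m, hm⟩
  · subst hm
    rw [show m + m = 2 * m by ring, coeff_sqSub_even, coeff_mul, coeff_mul,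
      Finset.Nat.sum_antidiagonal_eq_sum_range_succ_mk, Finset.Nat.sum_antidiagonal_eq_sum_range_succ_mk,
      sum_range_even (fun i => (coeff i) (sqSub f) * (coeff (2 * m - i)) (sqSub g))
        (fun i hi => by
          rw [coeff_sqSub, if_neg hi, zero_mul])]
    refine Finset.sum_congr rfl fun k hk => ?_
    have hk' : k ≤ m := by simpa using Nat.lt_succ_iff.mp (Finset.mem_range.mp hk)
    have : 2 * m - 2 * k = 2 * (m - k) := by omega
    rw [this, coeff_sqSub_even, coeff_sqSub_even]
  · subst hm
    rw [coeff_sqSub_odd, coeff_mul]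
    refine (Finset.sum_eq_zero fun p hp => ?_).symm
    have hp' : p.1 + p.2 = 2 * m + 1 := Finset.HasAntidiagonal.mem_antidiagonal.mp hp
    rcases Nat.even_or_odd p.1 with h1 | h1
    · have h2 : ¬ 2 ∣ p.2 := by rcases h1 with ⟨a, ha⟩; omega
      rw [coeff_sqSub g, if_neg h2, mul_zero]
    · have h2 : ¬ 2 ∣ p.1 := by rcases h1 with ⟨a, ha⟩; omega
      rw [coeff_sqSub f, if_neg h2, zero_mul]

@[simp] lemma constantCoeff_sqSub (f : S) :
    constantCoeff (sqSub f) = constantCoeff f := by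
  have h := coeff_sqSub_even f 0
  rw [mul_zero] at h
  simpa [← coeff_zero_eq_constantCoeff] using h

lemma sqSub_sub (f g : S) : sqSub (f - g) = sqSub f - sqSub g := by
  ext n; by_cases h : 2 ∣ n <;> simp [h]

lemma sqSub_one : sqSub 1 = 1 := by
  ext n
  by_cases h : n = 0
  · subst h; simp
  · by_cases h2 : 2 ∣ n <;> simp [h, h2, coeff_one, Nat.div_eq_zero_iff] <;> omega

lemma sqSub_X_pow (k : ℕ) : sqSub (X ^ k : S) = X ^ (2 * k) := by
  ext n
  by_cases h2 : 2 ∣ n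
  · obtain ⟨m, rfl⟩ := h2
    rw [coeff_sqSub_even, coeff_X_pow, coeff_X_pow]
    by_cases h : m = k <;> simp [h] <;> omega
  · rw [coeff_sqSub, if_neg h2, coeff_X_pow, if_neg (by rintro rfl; exact h2 ⟨k, rfl⟩)]

/-! ### The V operator -/

noncomputable def rE (f : S) : S := PowerSeries.mk fun n => (coeff (2 * n)) f

lemma even_mul_negS (f : S) (m : ℕ) : (coeff (2 * m + 1)) (f * negS f) = 0 := by
  rw [coeff_mul]
  refine Finset.sum_involution (fun p _ => (p.2, p.1)) ?_ ?_ ?_ (fun a ha => rfl)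
  · intro ⟨i, j⟩ ha
    have hij : i + j = 2 * m + 1 := Finset.HasAntidiagonal.mem_antidiagonal.mp ha
    simp only [coeff_negS]
    rcases Nat.even_or_odd i with hi | hi
    · have hj : Odd j := by rcases hi with ⟨a, ha'⟩; exact ⟨m - a, by omega⟩
      rw [hi.neg_one_pow, hj.neg_one_pow]; ring
    · have hj : Even j := by rcases hi with ⟨a, ha'⟩; exact ⟨m - a, by omega⟩
      rw [hi.neg_one_pow, hj.neg_one_pow]; ring
  · intro ⟨i, j⟩ ha _
    have hij : i + j = 2 * m + 1 := Finset.HasAntidiagonal.mem_antidiagonal.mp ha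
    simp only [ne_eq, Prod.mk.injEq, not_and]
    intro h1 h2; omega
  · intro ⟨i, j⟩ ha
    have hij : i + j = 2 * m + 1 := Finset.HasAntidiagonal.mem_antidiagonal.mp ha
    dsimp only
    exact Finset.HasAntidiagonal.mem_antidiagonal.mpr (by omega)

noncomputable def V (f : S) : S := rE (f * negS f)

lemma sqSub_V (f : S) : sqSub (V f) = f * negS f := by
  ext n
  rcases Nat.even_or_odd n with ⟨m, hm⟩ | ⟨m, hm⟩
  · subst hm
    rw [show m + m = 2 * m by ring, coeff_sqSub_even]
    simp [V, rE]
  · subst hm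
    rw [coeff_sqSub_odd]
    exact (even_mul_negS f m).symm

lemma V_one : V 1 = 1 := by
  apply sqSub_injective
  rw [sqSub_V, sqSub_one, map_one, mul_one]

lemma V_mul (f g : S) : V (f * g) = V f * V g := by
  apply sqSub_injective
  rw [sqSub_V, sqSub_mul, sqSub_V, sqSub_V, map_mul]
  ring

lemma constantCoeff_V (f : S) :
    constantCoeff (V f) = (constantCoeff f) ^ 2 := by
  have h : constantCoeff (sqSub (V f)) = constantCoeff (f * negS f) := by rw [sqSub_V]
  rw [constantCoeff_sqSub] at h
  rw [h, map_mul]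
  have : constantCoeff (negS f) = constantCoeff f := by
    rw [← coeff_zero_eq_constantCoeff, coeff_negS, pow_zero, one_mul]
  rw [this]; ring

/-! ### Truncated equality -/

def EqTo (N : ℕ) (f g : S) : Prop := ∀ i < N, (coeff i) f = (coeff i) g

lemma EqTo.refl (N : ℕ) (f : S) : EqTo N f f := fun _ _ => rfl

lemma EqTo.symm {N : ℕ} {f g : S} (h : EqTo N f g) : EqTo N g f := fun i hi => (h i hi).symm

lemma EqTo.trans {N : ℕ} {f g h : S} (h1 : EqTo N f g) (h2 : EqTo N g h) : EqTo N f h :=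
  fun i hi => (h1 i hi).trans (h2 i hi)

lemma EqTo.mono {M N : ℕ} {f g : S} (hMN : M ≤ N) (h : EqTo N f g) : EqTo M f g :=
  fun i hi => h i (lt_of_lt_of_le hi hMN)

lemma EqTo.mul {N : ℕ} {f f' g g' : S} (hf : EqTo N f f') (hg : EqTo N g g') :
    EqTo N (f * g) (f' * g') := by
  intro n hn
  rw [coeff_mul, coeff_mul]
  refine Finset.sum_congr rfl fun p hp => ?_
  have hps : p.1 + p.2 = n := Finset.HasAntidiagonal.mem_antidiagonal.mp hp
  rw [hf p.1 (by omega), hg p.2 (by omega)]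

lemma EqTo.negS {N : ℕ} {f g : S} (h : EqTo N f g) : EqTo N (negS f) (negS g) := by
  intro i hi
  rw [coeff_negS, coeff_negS, h i hi]

lemma EqTo.V {N : ℕ} {f : S} (h : EqTo (2 * N) f 1) : EqTo N (HK.V f) 1 := by
  intro n hn
  have h2 : EqTo (2 * N) (f * HK.negS f) (1 * HK.negS 1) := h.mul h.negS
  rw [map_one, mul_one] at h2
  have := h2 (2 * n) (by omega)
  simp only [HK.V, rE, coeff_mk]
  rw [this, coeff_one, coeff_one]
  simp only [mul_eq_zero]
  omega

/-! ### The units 1 - X^m -/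

noncomputable def eS (m : ℕ) : S := PowerSeries.mk fun i => if m ∣ i then 1 else 0

lemma bU_mul_eS {m : ℕ} (hm : 1 ≤ m) : ((1 : S) - X ^ m) * eS m = 1 := by
  have hXe : (X ^ m : S) * eS m = eS m - 1 := by
    ext n
    rw [coeff_X_pow_mul', map_sub]
    by_cases h : m ≤ n
    · rw [if_pos h]
      simp only [eS, coeff_mk, coeff_one]
      have h1 : m ∣ n - m ↔ m ∣ n := by
        constructor
        · intro ⟨k, hk⟩
          exact ⟨k + 1, by rw [Nat.mul_succ]; omega⟩
        · intro ⟨k, hk⟩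
          rcases k with _ | k
          · omega
          · exact ⟨k, by rw [Nat.mul_succ] at hk; omega⟩
      have hn0 : n ≠ 0 := by omega
      by_cases h2 : m ∣ n
      · rw [if_pos (h1.mpr h2), if_pos h2, if_neg hn0]; ring
      · rw [if_neg (fun hh => h2 (h1.mp hh)), if_neg h2, if_neg hn0]; ring
    · rw [if_neg h]
      simp only [eS, coeff_mk, coeff_one]
      by_cases h2 : n = 0
      · subst h2; simp
      · rw [if_neg (fun hd => h (Nat.le_of_dvd (by omega) hd)), if_neg h2]; ring
  rw [sub_mul, one_mul, hXe]
  ring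

noncomputable def bU {m : ℕ} (hm : 1 ≤ m) : Sˣ :=
  Units.mkOfMulEqOne ((1 : S) - X ^ m) (eS m) (bU_mul_eS hm)

@[simp] lemma bU_val {m : ℕ} (hm : 1 ≤ m) : ((bU hm : Sˣ) : S) = (1 : S) - X ^ m := rfl

lemma bU_inv_val {m : ℕ} (hm : 1 ≤ m) : (((bU hm)⁻¹ : Sˣ) : S) = eS m := rfl

lemma EqTo_eS {m : ℕ} (hm : 1 ≤ m) : EqTo (2 * m) (eS m) (1 + X ^ m) := by
  intro i hi
  simp only [eS, coeff_mk, map_add, coeff_one, coeff_X_pow]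
  by_cases h0 : i = 0
  · subst h0
    rw [if_pos (dvd_zero m), if_pos rfl, if_neg (by omega : ¬ (0:ℕ) = m)]; ring
  · by_cases h1 : i = m
    · subst h1; simp [h0]
    · have hnd : ¬ m ∣ i := by
        intro ⟨k, hk⟩
        rcases k with _ | _ | k
        · omega
        · omega
        · rw [Nat.mul_succ, Nat.mul_succ] at hk; omega
      rw [if_neg hnd, if_neg h0, if_neg h1]; ring

noncomputable def CZ (a : ℤ) : S := PowerSeries.C a

lemma bpow {m : ℕ} (hm : 1 ≤ m) (c : ℤ) :
    EqTo (2 * m) (((bU hm ^ c : Sˣ) : S)) (1 - CZ c * X ^ m) := by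
  induction c using Int.induction_on with
  | zero => simp [CZ, EqTo.refl]
  | succ n ih =>
      have hz : (bU hm ^ ((n : ℤ) + 1) : Sˣ) = (bU hm ^ (n : ℤ)) * bU hm := by
        rw [zpow_add_one]
      rw [hz, Units.val_mul, bU_val]
      have h2 : EqTo (2 * m) (((bU hm ^ (n : ℤ) : Sˣ) : S) * ((1:S) - X ^ m))
          ((1 - CZ n * X ^ m) * ((1:S) - X ^ m)) := ih.mul (EqTo.refl _ _)
      refine h2.trans ?_
      intro i hi
      have hring : ((1:S) - CZ n * X ^ m) * ((1:S) - X ^ m)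
          = 1 - CZ ((n : ℤ) + 1) * X ^ m + CZ n * (X ^ m * X ^ m) := by
        simp only [CZ, map_add, map_one]
        ring
      rw [hring, ← pow_add]
      simp only [map_add, map_sub, CZ, coeff_C_mul, coeff_X_pow]
      rw [if_neg (show ¬ i = m + m by omega)]
      ring
  | pred n ih =>
      have hz : (bU hm ^ (-(n : ℤ) - 1) : Sˣ) = (bU hm ^ (-(n : ℤ))) * (bU hm)⁻¹ := by
        rw [show (-(n:ℤ) - 1) = -(n:ℤ) + (-1) by ring, zpow_add, zpow_neg_one]
      rw [hz, Units.val_mul, bU_inv_val]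
      have h2 : EqTo (2 * m) (((bU hm ^ (-(n:ℤ)) : Sˣ) : S) * eS m)
          ((1 - CZ (-(n:ℤ)) * X ^ m) * ((1:S) + X ^ m)) := ih.mul (EqTo_eS hm)
      refine h2.trans ?_
      intro i hi
      have hring : ((1:S) - CZ (-(n:ℤ)) * X ^ m) * ((1:S) + X ^ m)
          = 1 - CZ (-(n : ℤ) - 1) * X ^ m - CZ (-(n:ℤ)) * (X ^ m * X ^ m) := by
        simp only [CZ, map_sub, map_neg, map_one]
        ring
      rw [hring, ← pow_add]
      simp only [map_sub, CZ, coeff_C_mul, coeff_X_pow]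
      rw [if_neg (show ¬ i = m + m by omega)]
      ring

/-! ### The Good subgroup -/

noncomputable def Vhom : S →* S where
  toFun := V
  map_one' := V_one
  map_mul' := V_mul

noncomputable def Vu : Sˣ →* Sˣ := Units.map Vhom

@[simp] lemma Vu_val (u : Sˣ) : ((Vu u : Sˣ) : S) = V (u : S) := rfl

noncomputable def GoodSet : Subgroup Sˣ where
  carrier := {u | ∃ w : Sˣ, constantCoeff (w : S) = 1 ∧ Vu u * Vu (Vu u) = w ^ 2}
  mul_mem' := by
    rintro a b ⟨w, hw1, hw2⟩ ⟨v, hv1, hv2⟩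
    refine ⟨w * v, ?_, ?_⟩
    · rw [Units.val_mul, map_mul, hw1, hv1, mul_one]
    · rw [map_mul, map_mul, mul_pow, ← hw2, ← hv2]
      exact mul_mul_mul_comm _ _ _ _
  one_mem' := ⟨1, by simp, by simp⟩
  inv_mem' := by
    rintro a ⟨w, hw1, hw2⟩
    refine ⟨w⁻¹, ?_, ?_⟩
    · have : constantCoeff ((w : S)) * constantCoeff ((w⁻¹ : Sˣ) : S) = 1 := by
        rw [← map_mul, ← Units.val_mul, mul_inv_cancel, Units.val_one, map_one]
      rw [hw1, one_mul] at this; exact this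
    · rw [map_inv, map_inv, ← mul_inv, hw2, ← inv_pow]

lemma negS_one_sub_X_pow (m : ℕ) :
    negS ((1 : S) - X ^ m) = 1 - CZ ((-1) ^ m) * X ^ m := by
  ext n
  rw [coeff_negS]
  simp only [map_sub, coeff_one, CZ, coeff_C_mul, coeff_X_pow]
  by_cases h : n = m
  · subst h
    by_cases h0 : n = 0
    · subst h0; simp
    · rw [if_neg h0, if_pos rfl]; ring
  · rw [if_neg h]
    by_cases h0 : n = 0
    · subst h0; simp
    · rw [if_neg h0]; ring

lemma V_one_sub_X_pow_odd {m : ℕ} (hm : Odd m) : V ((1 : S) - X ^ m) = 1 - X ^ m := by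
  apply sqSub_injective
  rw [sqSub_V, negS_one_sub_X_pow, hm.neg_one_pow, sqSub_sub, sqSub_one, sqSub_X_pow]
  have : CZ (-1) = -1 := by simp [CZ]
  rw [this]
  have h2 : (X : S) ^ (2 * m) = X ^ m * X ^ m := by rw [← pow_add]; ring_nf
  rw [h2]; ring

lemma V_one_sub_X_pow_even {t : ℕ} : V ((1 : S) - X ^ (2 * t)) = ((1 : S) - X ^ t) ^ 2 := by
  apply sqSub_injective
  have hsq : sqSub (((1 : S) - X ^ t) ^ 2) = ((1 : S) - X ^ (2 * t)) ^ 2 := by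
    rw [sq, sq, sqSub_mul, sqSub_sub, sqSub_one, sqSub_X_pow]
  rw [sqSub_V, negS_one_sub_X_pow, Even.neg_one_pow ⟨t, by ring⟩, hsq]
  have : CZ 1 = 1 := by simp [CZ]
  rw [this, one_mul, sq]

lemma constCoeff_one_sub_X_pow {m : ℕ} (hm : 1 ≤ m) :
    constantCoeff ((1 : S) - X ^ m) = 1 := by
  rw [← coeff_zero_eq_constantCoeff]
  simp only [map_sub, coeff_one, coeff_X_pow, if_pos rfl, if_neg (by omega : ¬ (0:ℕ) = m)]
  simp

lemma bU_mem_GoodSet {m : ℕ} (hm : 1 ≤ m) : bU hm ∈ GoodSet := by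
  rcases Nat.even_or_odd m with ⟨t, ht⟩ | hodd
  · have ht' : m = 2 * t := by omega
    subst ht'
    have ht1 : 1 ≤ t := by omega
    have hVb : Vu (bU hm) = (bU ht1) ^ 2 := by
      apply Units.ext
      rw [Units.val_pow_eq_pow_val, bU_val]
      show V ((1 : S) - X ^ (2 * t)) = _
      rw [V_one_sub_X_pow_even]
    refine ⟨bU ht1 * Vu (bU ht1), ?_, ?_⟩
    · rw [Units.val_mul, map_mul, bU_val, Vu_val, bU_val, constantCoeff_V,
        constCoeff_one_sub_X_pow ht1]
      ring
    · rw [hVb, map_pow, mul_pow]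
  · have hVb : Vu (bU hm) = bU hm := by
      apply Units.ext
      rw [Vu_val, bU_val, V_one_sub_X_pow_odd hodd]
    refine ⟨bU hm, ?_, ?_⟩
    · rw [bU_val, constCoeff_one_sub_X_pow hm]
    · rw [hVb, hVb, sq]

/-! ### Peeling -/

lemma claimB (F : S) (hF : constantCoeff F = 1) (M : ℕ) :
    ∃ u ∈ GoodSet, EqTo M (((u⁻¹ : Sˣ) : S) * F) 1 := by
  induction M with
  | zero => exact ⟨1, one_mem _, fun i hi => absurd hi (by omega)⟩
  | succ M ih =>
      rcases Nat.eq_zero_or_pos M with rfl | hM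
      · refine ⟨1, one_mem _, fun i hi => ?_⟩
        have h0 : i = 0 := by omega
        subst h0
        simp [coeff_zero_eq_constantCoeff, hF]
      · obtain ⟨u, hu, hr⟩ := ih
        set r := ((u⁻¹ : Sˣ) : S) * F with hrdef
        set a := (coeff M) r with ha
        refine ⟨u * (bU hM) ^ (-a), mul_mem hu (zpow_mem (bU_mem_GoodSet hM) _), ?_⟩
        have hinv : (((u * (bU hM) ^ (-a))⁻¹ : Sˣ) : S) = ((bU hM ^ a : Sˣ) : S) * ((u⁻¹ : Sˣ) : S) := by
          rw [mul_inv, ← zpow_neg, neg_neg, Units.val_mul]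
          exact mul_comm _ _
        rw [hinv, mul_assoc, ← hrdef]
        have h1 : EqTo (M + 1) (((bU hM ^ a : Sˣ) : S)) (1 - CZ a * X ^ M) :=
          (bpow hM a).mono (by omega)
        have h2 : EqTo (M + 1) r (1 + CZ a * X ^ M) := by
          intro i hi
          simp only [map_add, coeff_one, CZ, coeff_C_mul, coeff_X_pow]
          by_cases hiM : i = M
          · subst hiM
            rw [if_neg (by omega : ¬ i = 0), if_pos rfl, ← ha]
            ring
          · have hi' : i < M := by omega
            rw [hr i hi', coeff_one, if_neg hiM]
            ring
        refine (h1.mul h2).trans ?_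
        intro i hi
        have hring : ((1:S) - CZ a * X ^ M) * ((1:S) + CZ a * X ^ M)
            = 1 - CZ (a * a) * (X ^ M * X ^ M) := by
          simp only [CZ, map_mul]; ring
        rw [hring, ← pow_add]
        simp only [map_sub, CZ, coeff_C_mul, coeff_X_pow]
        rw [if_neg (show ¬ i = M + M by omega)]
        ring

/-! ### Core lemma -/

lemma core (F : S) (hF : constantCoeff F = 1) (N : ℕ) :
    ∃ g : S, constantCoeff g = 1 ∧ EqTo N (V F * V (V F)) (g ^ 2) := by
  obtain ⟨u, ⟨w, hw1, hw2⟩, hr⟩ := claimB F hF (4 * N)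
  set r := ((u⁻¹ : Sˣ) : S) * F with hrdef
  have hFur : F = (u : S) * r := by
    rw [hrdef, ← mul_assoc, ← Units.val_mul, mul_inv_cancel, Units.val_one, one_mul]
  have hVF : V F = V (u : S) * V r := by rw [hFur, V_mul]
  have hVVF : V (V F) = V (V (u : S)) * V (V r) := by rw [hVF, V_mul]
  have hT : V F * V (V F) = (V (u : S) * V (V (u : S))) * (V r * V (V r)) := by
    rw [hVVF, hVF]; ring
  have hu2 : V (u : S) * V (V (u : S)) = ((w : S)) ^ 2 := by
    have := congrArg (fun v : Sˣ => (v : S)) hw2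
    simpa [Units.val_mul, Units.val_pow_eq_pow_val] using this
  have hVr : EqTo (2 * N) (V r) 1 := EqTo.V (hr.mono (by omega : 2 * (2 * N) ≤ 4 * N))
  have hVVr : EqTo N (V (V r)) 1 := EqTo.V hVr
  have hs : EqTo N (V r * V (V r)) 1 := by
    have := (hVr.mono (by omega : N ≤ 2 * N)).mul hVVr
    rwa [one_mul] at this
  refine ⟨(w : S), hw1, ?_⟩
  rw [hT, hu2]
  have hfin : EqTo N (((w : S)) ^ 2 * (V r * V (V r))) (((w : S)) ^ 2 * 1) :=
    (EqTo.refl _ _).mul hs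
  rwa [mul_one] at hfin

/-! ### Gluing -/

lemma glue (f : S) (H : ∀ N, ∃ g : S, constantCoeff g = 1 ∧ EqTo N f (g ^ 2)) :
    ∃ h : S, constantCoeff h = 1 ∧ h ^ 2 = f := by
  choose G hG1 hG2 using H
  have consist : ∀ (k M N : ℕ), k < M → k < N → (coeff k) (G M) = (coeff k) (G N) := by
    intro k
    induction k using Nat.strong_induction_on with
    | _ k ih =>
      intro M N hkM hkN
      have hd : ∀ j < k, (coeff j) (G M - G N) = 0 := by
        intro j hj
        rw [map_sub, ih j hj M N (by omega) (by omega), sub_self]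
      have hsq : (coeff k) ((G M) ^ 2) = (coeff k) ((G N) ^ 2) := by
        rw [← hG2 M k hkM, ← hG2 N k hkN]
      have hfac : (G M) ^ 2 - (G N) ^ 2 = (G M - G N) * (G M + G N) := by ring
      have hzero : (coeff k) ((G M - G N) * (G M + G N)) = 0 := by
        rw [← hfac, map_sub, hsq, sub_self]
      rw [coeff_mul] at hzero
      have hsingle : ∑ p ∈ Finset.HasAntidiagonal.antidiagonal k,
          (coeff p.1) (G M - G N) * (coeff p.2) (G M + G N)
          = (coeff k) (G M - G N) * (coeff 0) (G M + G N) := by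
        refine Finset.sum_eq_single (k, 0) ?_ ?_
        · intro p hp hne
          have hps : p.1 + p.2 = k := Finset.HasAntidiagonal.mem_antidiagonal.mp hp
          have : p.1 < k := by
            rcases Nat.lt_or_ge p.1 k with h | h
            · exact h
            · exfalso; apply hne
              have : p.1 = k := by omega
              have : p.2 = 0 := by omega
              exact Prod.ext (by omega) this
          rw [hd p.1 this, zero_mul]
        · intro hk
          exact absurd (Finset.HasAntidiagonal.mem_antidiagonal.mpr (by omega)) hk
      rw [hsingle] at hzero
      have hconst : (coeff 0) (G M + G N) = 2 := by
        rw [map_add, coeff_zero_eq_constantCoeff]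
        simp only [coeff_zero_eq_constantCoeff] at *
        rw [hG1 M, hG1 N]; norm_num
      rw [hconst, map_sub] at hzero
      have := sub_eq_zero.mp (by linarith : (coeff k) (G M) - (coeff k) (G N) = 0)
      exact this
  set h : S := PowerSeries.mk fun n => (coeff n) (G (n + 1)) with hh
  have hcoeff : ∀ k N, k < N → (coeff k) h = (coeff k) (G N) := by
    intro k N hkN
    rw [hh, coeff_mk]
    exact consist k (k + 1) N (by omega) hkN
  refine ⟨h, ?_, ?_⟩
  · rw [← coeff_zero_eq_constantCoeff, hcoeff 0 1 (by omega), coeff_zero_eq_constantCoeff, hG1]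
  · ext n
    have h1 : EqTo (n + 1) h (G (n + 1)) := fun i hi => hcoeff i (n + 1) hi
    have h2 : EqTo (n + 1) (h * h) (G (n + 1) * G (n + 1)) := h1.mul h1
    have := h2 n (by omega)
    rw [sq, this, ← sq]
    exact (hG2 (n + 1) n (by omega)).symm

/-! ### Final assembly -/

lemma iSub_sqSub (g : S) : iSub (sqSub g) = sqSub (negS g) := by
  ext n
  rw [show iSub (sqSub g) = PowerSeries.mk fun n => (-1) ^ (n / 2) * (coeff n) (sqSub g) from rfl,
    coeff_mk]
  rcases Nat.even_or_odd n with ⟨m, hm⟩ | ⟨m, hm⟩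
  · subst hm
    rw [show m + m = 2 * m by ring, coeff_sqSub_even, coeff_sqSub_even, coeff_negS,
      show 2 * m / 2 = m by omega]
  · subst hm
    rw [coeff_sqSub_odd, coeff_sqSub_odd, mul_zero]

lemma coeff_comp_neg (p : Polynomial ℤ) (n : ℕ) :
    (p.comp (-Polynomial.X)).coeff n = (-1) ^ n * p.coeff n := by
  induction p using Polynomial.induction_on' with
  | add p q hp hq =>
      rw [Polynomial.add_comp, Polynomial.coeff_add, Polynomial.coeff_add, hp, hq]
      ring
  | monomial k a =>
      rw [Polynomial.monomial_comp]
      have hpow : (-Polynomial.X : Polynomial ℤ) ^ k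
          = Polynomial.C ((-1 : ℤ) ^ k) * Polynomial.X ^ k := by
        rw [neg_pow]
        simp [map_pow]
      rw [hpow, ← mul_assoc, ← Polynomial.C_mul, Polynomial.coeff_C_mul,
        Polynomial.coeff_X_pow, Polynomial.coeff_monomial]
      by_cases h : n = k
      · subst h; simp; ring
      · rw [if_neg h, if_neg (fun hh => h hh.symm)]
        ring

lemma coe_comp_neg (p : Polynomial ℤ) :
    ((p.comp (-Polynomial.X) : Polynomial ℤ) : S) = negS (p : S) := by
  ext n
  rw [Polynomial.coeff_coe, coeff_negS, Polynomial.coeff_coe, coeff_comp_neg]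

end HK

open HK

/-- If `C ∈ 1 + z²·ℤ[z²]` factors as `C(z) = φ(z)·φ(-z)` for an integer polynomial `φ`,
then `C(z)·C(iz)·C(z²)` is the square of a power series in `1 + z·ℤ[[z]]`. -/
theorem hartley_kawauchi_square (C φ : Polynomial ℤ)
    (hC0 : C.coeff 0 = 1) (hCeven : ∀ n : ℕ, Odd n → C.coeff n = 0)
    (hfac : C = φ * φ.comp (-Polynomial.X)) :
    ∃ h : PowerSeries ℤ, (PowerSeries.constantCoeff) h = 1 ∧
      h ^ 2 = (C : PowerSeries ℤ) * iSub (C : PowerSeries ℤ) * sqSub (C : PowerSeries ℤ) := by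
  classical
  -- normalize the constant coefficient of φ
  have hφ0 : φ.coeff 0 * φ.coeff 0 = 1 := by
    have h := hC0
    rw [hfac, Polynomial.mul_coeff_zero, coeff_comp_neg, pow_zero, one_mul] at h
    exact h
  set ψ : Polynomial ℤ := if φ.coeff 0 = 1 then φ else -φ with hψ
  have hψ0 : ψ.coeff 0 = 1 := by
    rcases mul_self_eq_one_iff.mp hφ0 with h | h
    · rw [hψ, if_pos h]; exact h
    · rw [hψ, if_neg (by rw [h]; norm_num)]
      simp [h]
  have hfacψ : C = ψ * ψ.comp (-Polynomial.X) := by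
    by_cases h : φ.coeff 0 = 1
    · rw [hψ, if_pos h]; exact hfac
    · rw [hψ, if_neg h, Polynomial.neg_comp, neg_mul_neg]; exact hfac
  set F : S := (ψ : S) with hFdef
  have hconstF : constantCoeff F = 1 := by
    rw [hFdef, ← coeff_zero_eq_constantCoeff, Polynomial.coeff_coe, hψ0]
  have hCs : (C : S) = F * negS F := by
    rw [hfacψ, Polynomial.coe_mul, coe_comp_neg]
  have hCV : (C : S) = sqSub (V F) := by rw [hCs, sqSub_V]
  set g : S := V F with hgdef
  -- rewrite the target product
  have hRHS : (C : S) * iSub (C : S) * sqSub (C : S) = sqSub (sqSub (V F * V (V F))) := by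
    rw [hCV, iSub_sqSub, ← sqSub_mul, ← sqSub_mul, ← hgdef]
    rw [← sqSub_V g, ← sqSub_mul]
    rw [mul_comm (V g) g]
  obtain ⟨h₁, hh₁c, hh₁sq⟩ := glue (V F * V (V F)) (core F hconstF)
  refine ⟨sqSub (sqSub h₁), ?_, ?_⟩
  · rw [constantCoeff_sqSub, constantCoeff_sqSub, hh₁c]
  · rw [hRHS, sq, ← sqSub_mul, ← sqSub_mul, ← sq, hh₁sq]
end

section
/- The polynomial 1 + 2x + x² − x⁶ is not a square in the polynomial ring (ℤ/4ℤ)[x]. -/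
/-- The polynomial `1 + 2x + x² − x⁶` is not a square in `(ℤ/4ℤ)[x]`. -/
theorem not_square_zmod4 :
    ¬ IsSquare (1 + 2 * Polynomial.X + Polynomial.X ^ 2 - Polynomial.X ^ 6 :
        Polynomial (ZMod 4)) := by
  rintro ⟨q, hq⟩
  have h := congrArg (Polynomial.eval 1) hq
  simp [Polynomial.eval_add, Polynomial.eval_sub, Polynomial.eval_mul,
    Polynomial.eval_pow] at h
  have hs : IsSquare (3 : ZMod 4) := ⟨q.eval 1, by norm_num at h ⊢; exact h⟩
  revert hs; decide
end

section
/- If C(z) = φ(z)·φ(−z) for an integer polynomial φ with φ(0) = ±1, then C(2i) (the knot determinant, computed by substituting z² = −4) satisfies: |C evaluated at z² = −4| = |φ(2i)|², where φ(2i) ∈ ℤ[i]; hence the determinant of a strongly amphicheiral knot is a sum of two integer squares. -/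
lemma star_eval_aux (p : Polynomial ℤ) (z : GaussianInt) :
    (p.map (Int.castRingHom GaussianInt)).eval (star z)
      = star ((p.map (Int.castRingHom GaussianInt)).eval z) := by
  induction p using Polynomial.induction_on' with
  | add p q hp hq => simp [hp, hq]
  | monomial n a => simp [star_pow]

/-- If `C(z) = φ(z)·φ(−z)` for an integer polynomial `φ` with `φ(0) = ±1`, then the
determinant `C(2i)` (substituting `z² = −4`, computed in the Gaussian integers
`ℤ[i]`, where `2i = ⟨0,2⟩`) equals `|φ(2i)|² = Zsqrtd.norm (φ(2i))`; hence it is a sum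
of two integer squares. -/
theorem determinant_sum_of_two_squares (C φ : Polynomial ℤ)
    (hφ0 : φ.coeff 0 = 1 ∨ φ.coeff 0 = -1)
    (hC : C = φ * φ.comp (-Polynomial.X)) :
    Polynomial.eval (⟨0, 2⟩ : GaussianInt) (C.map (Int.castRingHom GaussianInt))
        = ((Zsqrtd.norm
            (Polynomial.eval (⟨0, 2⟩ : GaussianInt)
              (φ.map (Int.castRingHom GaussianInt))) : ℤ) : GaussianInt) ∧
    ∃ a b : ℤ,
      Polynomial.eval (⟨0, 2⟩ : GaussianInt) (C.map (Int.castRingHom GaussianInt))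
        = ((a ^ 2 + b ^ 2 : ℤ) : GaussianInt) := by
  set f := Int.castRingHom GaussianInt
  set z : GaussianInt := ⟨0, 2⟩
  set w := Polynomial.eval z (φ.map f) with hw
  have hstar : (-z : GaussianInt) = star z := by
    ext <;> simp [z, Zsqrtd.re_star, Zsqrtd.im_star]
  have h1 : Polynomial.eval z (C.map f) = w * star w := by
    rw [hC, Polynomial.map_mul, Polynomial.eval_mul, hw]
    congr 1
    rw [Polynomial.map_comp, Polynomial.eval_comp]
    simp only [Polynomial.map_neg, Polynomial.map_X, Polynomial.eval_neg,
      Polynomial.eval_X, hstar]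
    exact star_eval_aux φ z
  have h2 : w * star w = ((Zsqrtd.norm w : ℤ) : GaussianInt) :=
    (Zsqrtd.norm_eq_mul_conj w).symm
  refine ⟨h1.trans h2, w.re, w.im, ?_⟩
  rw [h1, h2]
  congr 1
  simp [Zsqrtd.norm_def]
  ring
end
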